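/- arXiv:2511.18535 — 2 statements merged into one kernel-verified Lean document; each statement's English description precedes it below -/
import Mathlib

section
/- Let Γ = C₄ × S₃ and G = C₃ ⋊ C₄ (with C₄ acting on C₃ through its quotient C₂ by inversion). Then G embeds into Γ as a subgroup such that O₂(G) ≤ O₂(Γ) and O₂(Γ) has a normal complement in Γ, but O₂(G) has no normal complement in G. -/
/-- The largest normal `p`-subgroup `O_p(G)` of a group `G`. -/
def pCore (p : ℕ) (G : Type*) [Group G] : Subgroup G :=
  ⨆ (H : Subgroup G) (_ : H.Normal ∧ IsPGroup p H), H

/-- `K` has a normal complement in `G`: a normal subgroup `N` with `N ∩ K = 1` and `NK = G`. -/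
def HasNormalComplement {G : Type*} [Group G] (K : Subgroup G) : Prop :=
  ∃ N : Subgroup G, N.Normal ∧ N ⊓ K = ⊥ ∧ N ⊔ K = ⊤

/-- Inversion automorphism of `C₃`. -/
def invAut : MulAut (Multiplicative (ZMod 3)) := MulEquiv.inv (Multiplicative (ZMod 3))

/-- The action of `C₄` on `C₃`, through the quotient `C₂`, by inversion. -/
def phi : Multiplicative (ZMod 4) →* MulAut (Multiplicative (ZMod 3)) :=
  MonoidHom.mk' (fun x => invAut ^ (Multiplicative.toAdd x).val) (by
    have h2 : invAut * invAut = 1 := by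
      ext x
      simp [invAut]
    have h4 : invAut ^ (4 : ℕ) = 1 := by
      have : invAut ^ (4 : ℕ) = (invAut * invAut) * (invAut * invAut) := by
        rw [mul_assoc]; rw [show (4:ℕ) = 1+1+1+1 from rfl]
        rw [pow_add, pow_add, pow_add, pow_one]; group
      rw [this, h2, one_mul]
    intro a b
    show invAut ^ (Multiplicative.toAdd (a * b)).val
        = invAut ^ (Multiplicative.toAdd a).val * invAut ^ (Multiplicative.toAdd b).val
    rw [← pow_add]
    have : (Multiplicative.toAdd (a * b)).val
        = ((Multiplicative.toAdd a).val + (Multiplicative.toAdd b).val) % 4 := by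
      rw [show Multiplicative.toAdd (a * b) = Multiplicative.toAdd a + Multiplicative.toAdd b
        from rfl, ZMod.val_add]
    rw [this, ← pow_eq_pow_mod _ h4])

/-- `G = C₃ ⋊ C₄`, with the generator of `C₄` acting on `C₃` by inversion. -/
abbrev TheGroup := SemidirectProduct (Multiplicative (ZMod 3)) (Multiplicative (ZMod 4)) phi

/-- `Γ = C₄ × S₃`. -/
abbrev Gam := Multiplicative (ZMod 4) × Equiv.Perm (Fin 3)

set_option maxRecDepth 8000
open scoped Pointwise

instance : DecidableEq TheGroup := fun a b =>
  decidable_of_iff (a.left = b.left ∧ a.right = b.right) (by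
    constructor
    · rintro ⟨h1, h2⟩; exact SemidirectProduct.ext h1 h2
    · rintro rfl; exact ⟨rfl, rfl⟩)

instance : Fintype TheGroup :=
  Fintype.ofEquiv (Multiplicative (ZMod 3) × Multiplicative (ZMod 4))
    { toFun := fun p => ⟨p.1, p.2⟩
      invFun := fun g => (g.left, g.right)
      left_inv := fun _ => rfl
      right_inv := fun _ => rfl }

/-- The central element of order 2 in `TheGroup`. -/
def cZ : TheGroup := ⟨1, Multiplicative.ofAdd 2⟩

/-- An element of order 4 in `TheGroup`. -/
def g4 : TheGroup := ⟨1, Multiplicative.ofAdd 1⟩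

/-- A generator of the `C₃` factor of `TheGroup`. -/
def aG : TheGroup := ⟨Multiplicative.ofAdd 1, 1⟩

def waux (g : TheGroup) : TheGroup := g⁻¹ * (aG * g * aG⁻¹)

/-- Every element of `TheGroup` is `1`, `cZ`, or yields a nontrivial element of order
dividing 3 inside any normal subgroup containing it. -/
theorem keyG : ∀ g : TheGroup, g = 1 ∨ g = cZ ∨ (g ^ 3 = 1 ∧ g ≠ 1) ∨
    ((g ^ 2) ^ 3 = 1 ∧ g ^ 2 ≠ 1) ∨ ((waux g) ^ 3 = 1 ∧ waux g ≠ 1) := by decide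

/-- A 3-cycle in `S₃`. -/
def c3 : Equiv.Perm (Fin 3) := finRotate 3

def uG : Gam := (1, c3)

def wg (g : Gam) : Gam := g⁻¹ * (uG * g * uG⁻¹)

theorem keyGam : ∀ g : Gam, g.2 ^ 2 = 1 → g.2 ≠ 1 → ((wg g) ^ 3 = 1 ∧ wg g ≠ 1) := by decide

/-- A 2-group contains no element of order 3. -/
theorem elem3 {G : Type*} [Group G] {H : Subgroup G} (hp : IsPGroup 2 H) {g : G}
    (hg : g ∈ H) (h3 : g ^ 3 = 1) (h1 : g ≠ 1) : False := by
  obtain ⟨k, hk⟩ := hp ⟨g, hg⟩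
  have hk' : g ^ (2 ^ k) = 1 := by
    have := congrArg Subtype.val hk
    simpa using this
  have hd : orderOf g ∣ 2 ^ k := orderOf_dvd_of_pow_eq_one hk'
  have hd3 : orderOf g ∣ 3 := orderOf_dvd_of_pow_eq_one h3
  have hco : Nat.Coprime (2 ^ k) 3 := Nat.Coprime.pow_left k (by decide)
  have hdd : orderOf g ∣ Nat.gcd (2 ^ k) 3 := Nat.dvd_gcd hd hd3
  rw [Nat.coprime_iff_gcd_eq_one.mp hco, Nat.dvd_one] at hdd
  exact h1 (orderOf_eq_one_iff.mp hdd)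

/-- `O₂(TheGroup)` as an explicit subgroup: `{1, cZ}`. -/
def Zc : Subgroup TheGroup where
  carrier := {1, cZ}
  one_mem' := Or.inl rfl
  mul_mem' := by
    rintro a b (rfl | rfl) (rfl | rfl)
    · exact Or.inl (one_mul 1)
    · exact Or.inr (one_mul cZ)
    · exact Or.inr (mul_one cZ)
    · exact Or.inl (by decide)
  inv_mem' := by
    rintro a (rfl | rfl)
    · exact Or.inl inv_one
    · exact Or.inr (by decide)

theorem memZc {g : TheGroup} : g ∈ Zc ↔ g = 1 ∨ g = cZ := Iff.rfl

theorem Zc_normal : Zc.Normal := by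
  constructor
  intro n hn g
  rcases memZc.mp hn with rfl | rfl
  · exact memZc.mpr (Or.inl (by group))
  · exact memZc.mpr (Or.inr (by revert g; decide))

theorem Zc_pgroup : IsPGroup 2 Zc := by
  intro x
  refine ⟨1, Subtype.ext ?_⟩
  rw [SubmonoidClass.coe_pow, OneMemClass.coe_one]
  rcases memZc.mp x.2 with h | h <;> rw [h] <;> decide

theorem pCoreG : pCore 2 TheGroup = Zc := by
  apply le_antisymm
  · refine iSup₂_le fun H hH => ?_
    intro g hg
    rcases keyG g with rfl | rfl | ⟨h3, h1⟩ | ⟨h3, h1⟩ | ⟨h3, h1⟩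
    · exact Zc.one_mem
    · exact memZc.mpr (Or.inr rfl)
    · exact (elem3 hH.2 hg h3 h1).elim
    · exact (elem3 hH.2 (pow_mem hg 2) h3 h1).elim
    · have hw : waux g ∈ H := H.mul_mem (H.inv_mem hg) (hH.1.conj_mem g hg aG)
      exact (elem3 hH.2 hw h3 h1).elim
  · exact le_iSup₂ (f := fun (H : Subgroup TheGroup) (_ : H.Normal ∧ IsPGroup 2 H) => H)
      Zc ⟨Zc_normal, Zc_pgroup⟩

/-- `O₂(Γ)` as an explicit subgroup: `C₄ × 1`. -/
def Pg : Subgroup Gam := (⊤ : Subgroup (Multiplicative (ZMod 4))).prod ⊥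

theorem memPg {g : Gam} : g ∈ Pg ↔ g.2 = 1 := by
  simp [Pg, Subgroup.mem_prod, Subgroup.mem_bot]

theorem Pg_normal : Pg.Normal := by
  constructor
  intro n hn g
  rw [memPg] at hn ⊢
  show g.2 * n.2 * g.2⁻¹ = 1
  rw [hn, mul_one, mul_inv_cancel]

theorem pow4gam : ∀ g : Gam, g.2 = 1 → g ^ 4 = 1 := by decide

theorem Pg_pgroup : IsPGroup 2 Pg := by
  intro x
  refine ⟨2, Subtype.ext ?_⟩
  rw [SubmonoidClass.coe_pow, OneMemClass.coe_one]
  exact pow4gam x (memPg.mp x.2)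

theorem pCoreGam : pCore 2 Gam = Pg := by
  apply le_antisymm
  · refine iSup₂_le fun H hH => ?_
    intro g hg
    obtain ⟨k, hk⟩ := hH.2 ⟨g, hg⟩
    have hk' : g ^ (2 ^ k) = 1 := by
      have := congrArg Subtype.val hk
      simpa using this
    have h2 : g.2 ^ (2 ^ k) = 1 := by
      have := congrArg Prod.snd hk'
      simpa using this
    have hd : orderOf g.2 ∣ 2 ^ k := orderOf_dvd_of_pow_eq_one h2
    have hd6 : orderOf g.2 ∣ 6 := by
      have h := orderOf_dvd_card (x := g.2)
      have hc : Fintype.card (Equiv.Perm (Fin 3)) = 6 := by decide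
      rwa [hc] at h
    have hsq : g.2 ^ 2 = 1 := by
      obtain ⟨j, -, hj⟩ := (Nat.dvd_prime_pow Nat.prime_two).mp hd
      rw [hj] at hd6
      have h23 : (2 : ℕ) ^ j ∣ 2 * 3 := hd6
      have h2' := (Nat.Coprime.pow_left j (by decide : Nat.Coprime 2 3)).dvd_of_dvd_mul_right h23
      exact orderOf_dvd_iff_pow_eq_one.mp (hj ▸ h2')
    by_cases hone : g.2 = 1
    · exact memPg.mpr hone
    · obtain ⟨h3, hne⟩ := keyGam g hsq hone
      have hw : wg g ∈ H := H.mul_mem (H.inv_mem hg) (hH.1.conj_mem g hg uG)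
      exact (elem3 hH.2 hw h3 hne).elim
  · exact le_iSup₂ (f := fun (H : Subgroup Gam) (_ : H.Normal ∧ IsPGroup 2 H) => H)
      Pg ⟨Pg_normal, Pg_pgroup⟩

-- embedding
def tau : Equiv.Perm (Fin 3) := Equiv.swap 0 1

def sigma : Multiplicative (ZMod 3) →* Equiv.Perm (Fin 3) :=
  MonoidHom.mk' (fun x => c3 ^ (Multiplicative.toAdd x).val) (by
    have h3 : c3 ^ (3 : ℕ) = 1 := by decide
    intro a b
    show c3 ^ (Multiplicative.toAdd (a * b)).val
        = c3 ^ (Multiplicative.toAdd a).val * c3 ^ (Multiplicative.toAdd b).val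
    rw [← pow_add]
    have : (Multiplicative.toAdd (a * b)).val
        = ((Multiplicative.toAdd a).val + (Multiplicative.toAdd b).val) % 3 := by
      rw [show Multiplicative.toAdd (a * b) = Multiplicative.toAdd a + Multiplicative.toAdd b
        from rfl, ZMod.val_add]
    rw [this, ← pow_eq_pow_mod _ h3])

def rho : Multiplicative (ZMod 4) →* Equiv.Perm (Fin 3) :=
  MonoidHom.mk' (fun x => tau ^ (Multiplicative.toAdd x).val) (by
    have h4 : tau ^ (4 : ℕ) = 1 := by decide
    intro a b
    show tau ^ (Multiplicative.toAdd (a * b)).val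
        = tau ^ (Multiplicative.toAdd a).val * tau ^ (Multiplicative.toAdd b).val
    rw [← pow_add]
    have : (Multiplicative.toAdd (a * b)).val
        = ((Multiplicative.toAdd a).val + (Multiplicative.toAdd b).val) % 4 := by
      rw [show Multiplicative.toAdd (a * b) = Multiplicative.toAdd a + Multiplicative.toAdd b
        from rfl, ZMod.val_add]
    rw [this, ← pow_eq_pow_mod _ h4])

def f1 : Multiplicative (ZMod 3) →* Gam :=
  (1 : Multiplicative (ZMod 3) →* Multiplicative (ZMod 4)).prod sigma

def f2 : Multiplicative (ZMod 4) →* Gam := (MonoidHom.id _).prod rho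

theorem hpt : ∀ t x, f1 (phi t x) = MulAut.conj (f2 t) (f1 x) := by decide

def emb : TheGroup →* Gam :=
  SemidirectProduct.lift f1 f2 (fun t => MonoidHom.ext fun x => hpt t x)

theorem emb_inj' : ∀ a : TheGroup, emb a = 1 → a = 1 := by decide

theorem emb_c_snd : (emb cZ).2 = 1 := by decide

/-- `G = C₃ ⋊ C₄` embeds into `Γ = C₄ × S₃` with `O₂(G) ≤ O₂(Γ)` and `O₂(Γ)` having a
normal complement in `Γ`, yet `O₂(G)` has no normal complement in `G`. -/
theorem counterexample_normal_complement :
    (∃ f : TheGroup →* Gam, Function.Injective f ∧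
      (pCore 2 TheGroup).map f ≤ pCore 2 Gam) ∧
    HasNormalComplement (pCore 2 Gam) ∧
    ¬ HasNormalComplement (pCore 2 TheGroup) := by
  refine ⟨⟨emb, (injective_iff_map_eq_one emb).mpr emb_inj', ?_⟩, ?_, ?_⟩
  · rw [pCoreG, pCoreGam]
    intro y hy
    rw [Subgroup.mem_map] at hy
    obtain ⟨g, hg, rfl⟩ := hy
    rcases memZc.mp hg with rfl | rfl
    · rw [map_one]; exact Pg.one_mem
    · exact memPg.mpr emb_c_snd
  · rw [pCoreGam]
    refine ⟨(⊥ : Subgroup (Multiplicative (ZMod 4))).prod ⊤, ?_, ?_, ?_⟩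
    · constructor
      intro n hn g
      rw [Subgroup.mem_prod] at hn ⊢
      refine ⟨?_, trivial⟩
      rw [Subgroup.mem_bot] at hn ⊢
      show g.1 * n.1 * g.1⁻¹ = 1
      rw [hn.1, mul_one, mul_inv_cancel]
    · ext g
      simp only [Subgroup.mem_inf, Subgroup.mem_prod, Subgroup.mem_bot, Subgroup.mem_top,
        Pg, and_true, true_and]
      constructor
      · rintro ⟨h1, h2⟩; exact Prod.ext h1 h2
      · rintro rfl; exact ⟨rfl, rfl⟩
    · rw [eq_top_iff]
      intro g _
      have hdecomp : g = (g.1, 1) * (1, g.2) := by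
        ext <;> simp
      rw [hdecomp]
      exact Subgroup.mul_mem _
        (Subgroup.mem_sup_right (Subgroup.mem_prod.mpr ⟨trivial, (Subgroup.mem_bot).mpr rfl⟩))
        (Subgroup.mem_sup_left (Subgroup.mem_prod.mpr ⟨(Subgroup.mem_bot).mpr rfl, trivial⟩))
  · rw [pCoreG]
    rintro ⟨N, hN, hinf, hsup⟩
    haveI : Zc.Normal := Zc_normal
    have hg4 : g4 ∈ ((N : Set TheGroup) * (Zc : Set TheGroup)) := by
      rw [← Subgroup.mul_normal N Zc]
      exact hsup.symm ▸ Subgroup.mem_top g4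
    obtain ⟨n, hn, z, hz, hnz⟩ := hg4
    have hnzc : n * z = g4 := hnz
    have hcN : cZ ∈ N := by
      rcases memZc.mp hz with rfl | rfl
      · have hnz' : n = g4 := by rw [← hnzc, mul_one]
        subst hnz'
        have : g4 ^ 2 = cZ := by decide
        exact this ▸ pow_mem hn 2
      · have hne : n = g4 * cZ⁻¹ := eq_mul_inv_of_mul_eq hnzc
        subst hne
        have : (g4 * cZ⁻¹) ^ 2 = cZ := by decide
        exact this ▸ pow_mem hn 2
    have hmem : cZ ∈ N ⊓ Zc := ⟨hcN, memZc.mpr (Or.inr rfl)⟩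
    rw [hinf, Subgroup.mem_bot] at hmem
    exact (by decide : cZ ≠ 1) hmem
end

section
/- Let q ≠ p be primes, P a finite p-group, V a finite-dimensional 𝔽_q P-module with C_V(P) = 0, and σ an automorphism of V of order p commuting with the P-action such that σv ∈ span_{𝔽_q}⟨v⟩ for all v ∈ V. Then there exists 0 ≠ v ∈ V with |P : C_P(v)| minimal among nonzero vectors, and some g ∈ P with σv = gv. -/
/-!
Since every vector is an eigenvector of `σ`, `σ` is a scalar `c`, and `c` is a primitive `p`-th
root of unity in `𝔽_q`. Let `v₀ ≠ 0` have a stabilizer `C = C_P(v₀)` of minimal index. As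
`C_V(P) = 0`, `C ≠ P`, so by the normalizer condition in the nilpotent group `P` some
`g ∈ N_P(C) \ C` has `g ^ p ∈ C`. Then `g` acts on `C_V(C) ∋ v₀` with order dividing `p`, and as
`X ^ p - 1` splits over `𝔽_q` it has an eigenvector `u` there, with eigenvalue `ζ`. Now
`C ≤ C_P(u)`, and minimality forces equality, so `g u ≠ u`: thus `ζ` is a primitive `p`-th root
of unity, `c = ζ ^ i` for some `i`, and `σ u = g ^ i u`.
-/

/-- The stabilizer `C_P(v)` of a vector `v` under a representation `ρ` of `P`. -/
def repStabilizer {K P V : Type*} [CommSemiring K] [Group P] [AddCommMonoid V]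
    [Module K V] (ρ : Representation K P V) (v : V) : Subgroup P where
  carrier := {g | ρ g v = v}
  one_mem' := by simp
  mul_mem' := by
    intro a b ha hb
    simp only [Set.mem_setOf_eq] at *
    rw [map_mul, Module.End.mul_apply, hb, ha]
  inv_mem' := by
    intro a ha
    simp only [Set.mem_setOf_eq] at *
    calc ρ a⁻¹ v = ρ a⁻¹ (ρ a v) := by rw [ha]
    _ = ρ (a⁻¹ * a) v := by rw [map_mul, Module.End.mul_apply]
    _ = v := by simp

open Polynomial

theorem LinearMap.exists_eq_smul_id_of_forall_exists_eq_smul {R V : Type*} [CommRing R]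
    [IsDomain R] [AddCommGroup V] [Module R V] [Module.Free R V] {f : V →ₗ[R] V}
    (h : ∀ v, ∃ c : R, f v = c • v) : ∃ c : R, f = c • 1 :=
  exists_eq_smul_id_of_forall_notLinearIndependent fun v ↦ by
    obtain ⟨c, hc⟩ := h v
    rw [LinearIndependent.pair_iff]
    push Not
    exact ⟨c, -1, by simp [hc], by simp⟩

theorem LinearEquiv.isPrimitiveRoot_of_eq_smul {K V : Type*} [Field K] [AddCommGroup V]
    [Module K V] {p : ℕ} [Fact p.Prime] {σ : V ≃ₗ[K] V} (hσp : σ ^ p = 1) (hσ1 : σ ≠ 1)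
    {c : K} (hc : ∀ v, σ v = c • v) : IsPrimitiveRoot c p := by
  obtain ⟨v, hv⟩ : ∃ v, σ v ≠ v := by
    by_contra! h
    exact hσ1 (LinearEquiv.ext h)
  have hv0 : v ≠ 0 := by
    rintro rfl
    simp at hv
  have hcp : c ^ p = 1 := smul_left_injective K hv0 <| by
    simpa [LinearEquiv.coe_pow, funext hc, smul_iterate_apply] using congr($hσp v)
  have hc1 : c ≠ 1 := by
    rintro rfl
    simp [hc] at hv
  exact orderOf_eq_prime hcp hc1 ▸ IsPrimitiveRoot.orderOf c

theorem IsPGroup.exists_pow_pow_notMem_pow_pow_succ_mem {G : Type*} [Group G] {p : ℕ}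
    (hG : IsPGroup p G) {H : Subgroup G} {g : G} (hg : g ∉ H) :
    ∃ k, g ^ p ^ k ∉ H ∧ g ^ p ^ (k + 1) ∈ H := by
  classical
  have hex : ∃ j, g ^ p ^ j ∈ H := by
    obtain ⟨j, hj⟩ := hG g
    exact ⟨j, hj ▸ H.one_mem⟩
  have hpos : Nat.find hex ≠ 0 := by
    intro h0
    have := Nat.find_spec hex
    rw [h0, pow_zero, pow_one] at this
    exact hg this
  refine ⟨Nat.find hex - 1, Nat.find_min hex (by omega), ?_⟩
  rw [Nat.sub_add_cancel (Nat.pos_of_ne_zero hpos)]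
  exact Nat.find_spec hex

theorem IsPGroup.exists_mem_normalizer_notMem_pow_mem {G : Type*} [Group G] [Finite G] {p : ℕ}
    [Fact p.Prime] (hG : IsPGroup p G) {H : Subgroup G} (hH : H < ⊤) :
    ∃ g ∈ Subgroup.normalizer (H : Set G), g ∉ H ∧ g ^ p ∈ H := by
  have := hG.isNilpotent
  obtain ⟨g, hgN, hgH⟩ := SetLike.exists_of_lt (Group.normalizerCondition_of_isNilpotent H hH)
  obtain ⟨k, hk, hk'⟩ := hG.exists_pow_pow_notMem_pow_pow_succ_mem hgH
  exact ⟨g ^ p ^ k, Subgroup.pow_mem _ hgN _, hk, by rwa [← pow_mul, ← pow_succ]⟩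

theorem Module.End.exists_hasEigenvector_pow_eq_one {K V : Type*} [Field K] [AddCommGroup V]
    [Module K V] [FiniteDimensional K V] [Nontrivial V] {f : End K V} {n : ℕ} (hn : n ≠ 0)
    (hf : f ^ n = 1) (hsplit : Splits (X ^ n - C 1 : K[X])) :
    ∃ μ v, f.HasEigenvector μ v ∧ μ ^ n = 1 := by
  have hdvd : minpoly K f ∣ X ^ n - C 1 := minpoly.dvd _ _ (by simp [hf])
  have hroot : ∃ μ, (minpoly K f).IsRoot μ :=
    (hsplit.of_dvd (monic_X_pow_sub_C 1 hn).ne_zero hdvd).exists_eval_eq_zero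
      (minpoly.degree_pos (Algebra.IsIntegral.isIntegral f)).ne'
  obtain ⟨μ, hμ⟩ := hroot
  obtain ⟨v, hv⟩ := (hasEigenvalue_of_isRoot hμ).exists_hasEigenvector
  refine ⟨μ, v, hv, smul_left_injective K hv.2 ?_⟩
  simpa [hf] using (hv.pow_apply n).symm

namespace Representation

variable {K G V : Type*} [Field K] [Group G] [AddCommGroup V] [Module K V]
  (ρ : Representation K G V)

theorem apply_mem_invariants_comp_subtype_of_mem_normalizer {H : Subgroup G} {g : G}
    (hg : g ∈ Subgroup.normalizer (H : Set G)) {v : V}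
    (hv : v ∈ invariants (ρ.comp H.subtype)) :
    ρ g v ∈ invariants (ρ.comp H.subtype) := by
  rintro ⟨h, hh⟩
  have hconj : g⁻¹ * h * g ∈ H := by
    simpa using (Subgroup.mem_normalizer_iff.mp (inv_mem hg) h).mp hh
  calc ρ h (ρ g v) = ρ g (ρ (g⁻¹ * h * g) v) := by
        simp only [← Module.End.mul_apply, ← map_mul]
        group
    _ = ρ g v := congrArg (ρ g) (hv ⟨_, hconj⟩)

theorem exists_eigenvector_mem_invariants_of_mem_normalizer [FiniteDimensional K V]
    {H : Subgroup G} {g : G} (hg : g ∈ Subgroup.normalizer (H : Set G)) {n : ℕ} (hn : n ≠ 0)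
    (hgn : g ^ n ∈ H) (hsplit : Splits (X ^ n - C 1 : K[X]))
    (hH : invariants (ρ.comp H.subtype) ≠ ⊥) :
    ∃ u ∈ invariants (ρ.comp H.subtype), ∃ ζ : K,
      ζ ^ n = 1 ∧ Module.End.HasEigenvector (ρ g) ζ u := by
  have := Submodule.nontrivial_iff_ne_bot.mpr hH
  let A := (ρ g).restrict fun _ ↦ ρ.apply_mem_invariants_comp_subtype_of_mem_normalizer hg
  have hA : A ^ n = 1 := by
    ext ⟨w, hw⟩
    rw [Module.End.pow_restrict]
    simpa [← map_pow] using hw ⟨_, hgn⟩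
  obtain ⟨ζ, ⟨u, hu⟩, hAu, hζ⟩ := Module.End.exists_hasEigenvector_pow_eq_one hn hA hsplit
  exact ⟨u, hu, ζ, hζ, Module.End.mem_eigenspace_iff.mpr congr($(hAu.apply_eq_smul).1),
    by simpa using hAu.2⟩

end Representation

theorem exists_repStabilizer_index_minimal_apply_eq_smul {K P V : Type*} [Field K] [Group P]
    [Finite P] [AddCommGroup V] [Module K V] [FiniteDimensional K V] [Nontrivial V] {p : ℕ}
    [Fact p.Prime] (hP : IsPGroup p P) (ρ : Representation K P V)
    (hfix : ∀ v : V, (∀ g : P, ρ g v = v) → v = 0) {c : K} (hc : IsPrimitiveRoot c p) :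
    ∃ u : V, u ≠ 0 ∧
      (∀ w : V, w ≠ 0 → (repStabilizer ρ u).index ≤ (repStabilizer ρ w).index) ∧
      ∃ g : P, ρ g u = c • u := by
  obtain ⟨v₀, hv₀, hmin⟩ := exists_minimalFor_of_wellFoundedLT (fun v : V ↦ v ≠ 0)
    (fun v ↦ (repStabilizer ρ v).index) (exists_ne 0)
  set C := repStabilizer ρ v₀
  replace hmin (w : V) (hw : w ≠ 0) : C.index ≤ (repStabilizer ρ w).index :=
    (le_total _ _).elim id (hmin hw)
  have hCtop : C < ⊤ :=
    lt_top_iff_ne_top.mpr fun h ↦ hv₀ (hfix v₀ fun g ↦ (h ▸ Subgroup.mem_top g : g ∈ C))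
  obtain ⟨g, hgN, hgC, hgp⟩ := hP.exists_mem_normalizer_notMem_pow_mem hCtop
  obtain ⟨u, huC, ζ, hζp, hgu⟩ := ρ.exists_eigenvector_mem_invariants_of_mem_normalizer hgN
    (NeZero.ne p) hgp (X_pow_sub_one_splits hc)
    ((Submodule.ne_bot_iff _).mpr ⟨v₀, fun h ↦ h.2, hv₀⟩)
  have hCu : C ≤ repStabilizer ρ u := fun h hh ↦ huC ⟨h, hh⟩
  -- by minimality of `C.index`, the stabilizer of `u` cannot be larger than `C`
  have hgu1 : ρ g u ≠ u := fun hg ↦ (Subgroup.index_strictAnti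
    (SetLike.lt_iff_le_and_exists.mpr ⟨hCu, g, hg, hgC⟩)).not_ge (hmin u hgu.2)
  have hζ1 : ζ ≠ 1 := by
    rintro rfl
    exact hgu1 (by simpa using hgu.apply_eq_smul)
  have hζ : IsPrimitiveRoot ζ p := orderOf_eq_prime hζp hζ1 ▸ IsPrimitiveRoot.orderOf ζ
  obtain ⟨i, -, rfl⟩ := hζ.eq_pow_of_pow_eq_one hc.pow_eq_one
  exact ⟨u, hgu.2, fun w hw ↦ (Subgroup.index_antitone hCu).trans (hmin w hw), g ^ i,
    by rw [map_pow, hgu.pow_apply]⟩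

theorem scalar_order_p_automorphism_general {p q : ℕ} (hp : p.Prime) (hq : Fact q.Prime)
    {P : Type} [Group P] [Finite P] (hP : IsPGroup p P)
    {V : Type} [AddCommGroup V] [Module (ZMod q) V] [FiniteDimensional (ZMod q) V]
    (ρ : Representation (ZMod q) P V)
    (hfix : ∀ v : V, (∀ g : P, ρ g v = v) → v = 0)
    (σ : V ≃ₗ[ZMod q] V) (hσp : σ ^ p = 1) (hσ1 : σ ≠ 1)
    (hscal : ∀ v : V, ∃ c : ZMod q, σ v = c • v) :
    ∃ v : V, v ≠ 0 ∧
      (∀ w : V, w ≠ 0 → (repStabilizer ρ v).index ≤ (repStabilizer ρ w).index) ∧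
      ∃ g : P, σ v = ρ g v := by
  have : Fact p.Prime := ⟨hp⟩
  obtain ⟨c, hc⟩ :=
    LinearMap.exists_eq_smul_id_of_forall_exists_eq_smul (f := σ.toLinearMap) hscal
  have hσc (v : V) : σ v = c • v := congr($hc v)
  have : Nontrivial V := by
    by_contra h
    exact hσ1 (LinearEquiv.ext fun v ↦ (not_nontrivial_iff_subsingleton.mp h).elim _ _)
  obtain ⟨u, hu, hmin, g, hg⟩ := exists_repStabilizer_index_minimal_apply_eq_smul hP ρ hfix
    (σ.isPrimitiveRoot_of_eq_smul hσp hσ1 hσc)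
  exact ⟨u, hu, hmin, g, by rw [hσc, hg]⟩

/-- Let `q ≠ p` be primes, `P` a finite `p`-group, `V` a finite-dimensional
`𝔽_q P`-module with `C_V(P) = 0`, and `σ` an automorphism of `V` of order `p`
commuting with the `P`-action such that `σ v ∈ span ⟨v⟩` for all `v`. Then there is
`0 ≠ v ∈ V` with `|P : C_P(v)|` minimal among nonzero vectors and `g ∈ P` with
`σ v = g v`. -/
theorem scalar_order_p_automorphism {p q : ℕ} (hp : p.Prime) (hq : Fact q.Prime)
    (hqp : q ≠ p)
    {P : Type} [Group P] [Finite P] (hP : IsPGroup p P)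
    {V : Type} [AddCommGroup V] [Module (ZMod q) V] [FiniteDimensional (ZMod q) V]
    (ρ : Representation (ZMod q) P V)
    (hfix : ∀ v : V, (∀ g : P, ρ g v = v) → v = 0)
    (σ : V ≃ₗ[ZMod q] V) (hσp : σ ^ p = 1) (hσ1 : σ ≠ 1)
    (hcomm : ∀ g : P, ∀ v : V, σ (ρ g v) = ρ g (σ v))
    (hscal : ∀ v : V, ∃ c : ZMod q, σ v = c • v) :
    ∃ v : V, v ≠ 0 ∧
      (∀ w : V, w ≠ 0 → (repStabilizer ρ v).index ≤ (repStabilizer ρ w).index) ∧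
      ∃ g : P, σ v = ρ g v :=
  scalar_order_p_automorphism_general hp hq hP ρ hfix σ hσp hσ1 hscal
end
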